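/- Let H be a thick spider with partition (S, K, R) such that |K| = 3 and |R| = 1, let u ∈ S, and let uw be a tail added to H (w ∉ V(H)). Then the minimum number of fill edges (excluding the tail uw) in a P4-sparse completion of H+uw equals |K| = 3. -/

import Mathlib

/-!
`H + uw` has eight vertices, and the spider data determine it up to isomorphism: it is the model
`thickSpiderTail 0` whose legs and body are indexed by `Fin 3`. In the model, joining leg `0` to
its missing body vertex and to the head, and the tail to that body vertex, gives a `P₄`-sparse
completion with three fill edges: its only induced `P₄`s pairwise share two vertices. Conversely,
a `P₄`-sparse completion must add an edge inside any five vertices carrying two induced `P₄`s;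
branching on that edge three times (`ForcesFills`) shows that three fill edges are needed. Both
facts about the model are finite checks done by `decide`.
-/

open SimpleGraph Set

variable {α : Type*}

/-- The graph `G + uw` obtained from `G` by adding the tail edge `uw`. -/
def addTail (G : SimpleGraph α) (u w : α) : SimpleGraph α :=
  G ⊔ SimpleGraph.fromEdgeSet {s(u, w)}

/-- The number of fill edges of a completion `G'` of the base graph `base`:
the edges of `G'` that are not edges of `base`. -/
noncomputable def fillCount (base G' : SimpleGraph α) : ℕ :=
  (G'.edgeSet \ base.edgeSet).ncard

/-- `S` is an independent set of the graph `G`. -/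
def IsIndepSetOn (G : SimpleGraph α) (S : Set α) : Prop :=
  ∀ x ∈ S, ∀ y ∈ S, ¬ G.Adj x y

/-- A graph is split if its vertex set can be partitioned into a clique and an
independent set. -/
def IsSplitGraph (G : SimpleGraph α) : Prop :=
  ∃ K S : Set α, K ∪ S = Set.univ ∧ Disjoint K S ∧ G.IsClique K ∧ IsIndepSetOn G S

/-- `a b c d` (in this order) induce a chordless path `P₄` in `G`. -/
def IsInducedP4 (G : SimpleGraph α) (a b c d : α) : Prop :=
  a ≠ b ∧ a ≠ c ∧ a ≠ d ∧ b ≠ c ∧ b ≠ d ∧ c ≠ d ∧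
  G.Adj a b ∧ G.Adj b c ∧ G.Adj c d ∧ ¬ G.Adj a c ∧ ¬ G.Adj a d ∧ ¬ G.Adj b d

/-- `a b c d` (in this order) induce a chordless cycle `C₄` in `G`. -/
def IsInducedC4 (G : SimpleGraph α) (a b c d : α) : Prop :=
  a ≠ b ∧ a ≠ c ∧ a ≠ d ∧ b ≠ c ∧ b ≠ d ∧ c ≠ d ∧
  G.Adj a b ∧ G.Adj b c ∧ G.Adj c d ∧ G.Adj d a ∧ ¬ G.Adj a c ∧ ¬ G.Adj b d

/-- `a b c d` induce a `2K₂` (two independent edges `ab` and `cd`) in `G`. -/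
def IsInduced2K2 (G : SimpleGraph α) (a b c d : α) : Prop :=
  a ≠ b ∧ a ≠ c ∧ a ≠ d ∧ b ≠ c ∧ b ≠ d ∧ c ≠ d ∧
  G.Adj a b ∧ G.Adj c d ∧ ¬ G.Adj a c ∧ ¬ G.Adj a d ∧ ¬ G.Adj b c ∧ ¬ G.Adj b d

/-- A graph is threshold iff it has no induced `C₄`, `P₄`, or `2K₂`. -/
def IsThresholdGraph (G : SimpleGraph α) : Prop :=
  (∀ a b c d, ¬ IsInducedC4 G a b c d) ∧ (∀ a b c d, ¬ IsInducedP4 G a b c d) ∧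
  (∀ a b c d, ¬ IsInduced2K2 G a b c d)

/-- A graph is quasi-threshold iff it has no induced `C₄` or `P₄`. -/
def IsQuasiThresholdGraph (G : SimpleGraph α) : Prop :=
  (∀ a b c d, ¬ IsInducedC4 G a b c d) ∧ (∀ a b c d, ¬ IsInducedP4 G a b c d)

/-- `t` is the vertex set of an induced `P₄` of `G`. -/
def IsP4SetOn (G : SimpleGraph α) (t : Set α) : Prop :=
  ∃ a b c d : α, t = {a, b, c, d} ∧ IsInducedP4 G a b c d

/-- A graph is `P₄`-sparse iff every set of five vertices induces at most one `P₄`. -/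
def IsP4Sparse (G : SimpleGraph α) : Prop :=
  ∀ s : Set α, s.ncard = 5 →
    ∀ t₁ ⊆ s, ∀ t₂ ⊆ s, IsP4SetOn G t₁ → IsP4SetOn G t₂ → t₁ = t₂

/-- The subgraph of `H` induced by the set `R` (as a graph on the same vertex type,
all vertices outside `R` being isolated). -/
def restrictSet (H : SimpleGraph α) (R : Set α) : SimpleGraph α where
  Adj x y := H.Adj x y ∧ x ∈ R ∧ y ∈ R
  symm := ⟨fun x y ⟨h, hx, hy⟩ => ⟨h.symm, hy, hx⟩⟩
  loopless := ⟨fun x h => H.irrefl h.1⟩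

/-- `(S, K, R)` is a thin-spider partition of (the vertex set of) `H`. -/
def ThinSpider (H : SimpleGraph α) (S K R : Set α) : Prop :=
  IsIndepSetOn H S ∧ H.IsClique K ∧ S.ncard = K.ncard ∧ 2 ≤ K.ncard ∧
  Disjoint S K ∧ Disjoint S R ∧ Disjoint K R ∧
  (∀ r ∈ R, ∀ k ∈ K, H.Adj r k) ∧ (∀ r ∈ R, ∀ s ∈ S, ¬ H.Adj r s) ∧
  ∃ f : α → α, Set.BijOn f S K ∧ ∀ s ∈ S, ∀ k ∈ K, (H.Adj s k ↔ k = f s)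

/-- `(S, K, R)` is a thick-spider partition of (the vertex set of) `H`;
thick spiders are assumed to have `|K| ≥ 3`. -/
def ThickSpider (H : SimpleGraph α) (S K R : Set α) : Prop :=
  IsIndepSetOn H S ∧ H.IsClique K ∧ S.ncard = K.ncard ∧ 3 ≤ K.ncard ∧
  Disjoint S K ∧ Disjoint S R ∧ Disjoint K R ∧
  (∀ r ∈ R, ∀ k ∈ K, H.Adj r k) ∧ (∀ r ∈ R, ∀ s ∈ S, ¬ H.Adj r s) ∧
  ∃ f : α → α, Set.BijOn f S K ∧ ∀ s ∈ S, ∀ k ∈ K, (H.Adj s k ↔ k ≠ f s)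

/-- The set of possible numbers of fill edges of completions of `base` into the
graph class `C`. -/
def completionFills (C : SimpleGraph α → Prop) (base : SimpleGraph α) : Set ℕ :=
  {n | ∃ G' : SimpleGraph α, base ≤ G' ∧ C G' ∧ fillCount base G' = n}

section InducedSubgraphs

variable {V W : Type*}

lemma IsInducedP4.of_comap {G : SimpleGraph W} {f : V → W} (hf : f.Injective) {a b c d : V}
    (h : IsInducedP4 (G.comap f) a b c d) : IsInducedP4 G (f a) (f b) (f c) (f d) := by
  obtain ⟨hab, hac, had, hbc, hbd, hcd, h⟩ := h
  exact ⟨hf.ne hab, hf.ne hac, hf.ne had, hf.ne hbc, hf.ne hbd, hf.ne hcd, h⟩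

lemma IsP4SetOn.image_of_comap {G : SimpleGraph W} {f : V → W} (hf : f.Injective) {t : Set V}
    (h : IsP4SetOn (G.comap f) t) : IsP4SetOn G (f '' t) := by
  obtain ⟨a, b, c, d, rfl, h⟩ := h
  exact ⟨f a, f b, f c, f d, by simp only [Set.image_insert_eq, Set.image_singleton],
    h.of_comap hf⟩

lemma IsP4Sparse.comap {G : SimpleGraph W} {f : V → W} (hf : f.Injective) (hG : IsP4Sparse G) :
    IsP4Sparse (G.comap f) := by
  intro s hs t₁ ht₁ t₂ ht₂ h₁ h₂
  refine Set.image_injective.mpr hf (hG (f '' s) ?_ _ (Set.image_mono ht₁) _ (Set.image_mono ht₂)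
    (h₁.image_of_comap hf) (h₂.image_of_comap hf))
  rwa [Set.ncard_image_of_injective _ hf]

lemma fillCount_comap (e : V ≃ W) (B G : SimpleGraph W) :
    fillCount (B.comap e) (G.comap e) = fillCount B G := by
  have : (G.comap e).edgeSet \ (B.comap e).edgeSet = Sym2.map e ⁻¹' (G.edgeSet \ B.edgeSet) := by
    ext z
    induction z using Sym2.ind
    simp
  refine (congrArg Set.ncard this).trans (Set.ncard_preimage_of_injective_subset_range
    (Sym2.map.injective e.injective) fun z _ => ⟨Sym2.map e.symm z, ?_⟩)
  simp [Sym2.map_map]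

lemma completionFills_subset_comap (e : V ≃ W) (B : SimpleGraph W) :
    completionFills IsP4Sparse B ⊆ completionFills IsP4Sparse (B.comap e) := by
  rintro _ ⟨G, hBG, hG, rfl⟩
  exact ⟨G.comap e, fun _ _ h => hBG h, hG.comap e.injective, fillCount_comap e B G⟩

lemma completionFills_isP4Sparse_congr {B : SimpleGraph V} {B' : SimpleGraph W} (φ : B ≃g B') :
    completionFills IsP4Sparse B = completionFills IsP4Sparse B' := by
  have hB : B = B'.comap φ := by ext; exact φ.map_adj_iff.symm
  have hB' : (B'.comap φ).comap φ.symm.toEquiv = B' := by ext; simp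
  rw [hB]
  refine le_antisymm ?_ (completionFills_subset_comap φ.toEquiv B')
  simpa only [hB'] using completionFills_subset_comap φ.symm.toEquiv (B'.comap φ)

end InducedSubgraphs

section P4Conflicts

variable {V : Type*} {B G : SimpleGraph V}

lemma isP4Sparse_of_forall_isInducedP4_mem [DecidableEq V] (𝒯 : Finset (Finset V))
    (hG : ∀ a b c d, IsInducedP4 G a b c d → {a, b, c, d} ∈ 𝒯)
    (h𝒯 : ∀ t ∈ 𝒯, ∀ t' ∈ 𝒯, t ≠ t' → 5 < (t ∪ t').card) : IsP4Sparse G := by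
  rintro s hs _ ht₁ _ ht₂ ⟨a, b, c, d, rfl, h₁⟩ ⟨a', b', c', d', rfl, h₂⟩
  by_contra hne
  have hlt := h𝒯 _ (hG _ _ _ _ h₁) _ (hG _ _ _ _ h₂) fun h => hne (by
    simpa using congrArg ((↑) : Finset V → Set V) h)
  have hsub : (↑({a, b, c, d} ∪ {a', b', c', d'} : Finset V) : Set V) ⊆ s := by
    push_cast
    exact Set.union_subset ht₁ ht₂
  have := Set.ncard_le_ncard hsub (Set.finite_of_ncard_pos (by omega))
  rw [Set.ncard_coe_finset] at this
  omega

/-- Up to reversing the path `a b c d`, these are all the ways in which a fifth vertex `e` creates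
a second induced `P₄` among `a, b, c, d, e`. -/
def MakesSecondP4 (G : SimpleGraph V) (a b c d e : V) : Prop :=
  e ≠ a ∧ e ≠ b ∧ e ≠ c ∧ e ≠ d ∧
    (IsInducedP4 G e a b c ∨ IsInducedP4 G e b c d ∨ IsInducedP4 G a e c d ∨ IsInducedP4 G a e d c)

lemma not_isP4Sparse_of_makesSecondP4 {a b c d e : V} (h₁ : IsInducedP4 G a b c d)
    (h : MakesSecondP4 G a b c d e) : ¬ IsP4Sparse G := by
  obtain ⟨hea, heb, hec, hed, h₂⟩ := h
  obtain ⟨t, ht, hts, het⟩ : ∃ t, IsP4SetOn G t ∧ t ⊆ {a, b, c, d, e} ∧ e ∈ t := by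
    rcases h₂ with h₂ | h₂ | h₂ | h₂ <;> refine ⟨_, ⟨_, _, _, _, rfl, h₂⟩, ?_, by simp⟩ <;>
      intro x <;> simp only [Set.mem_insert_iff, Set.mem_singleton_iff] <;> tauto
  have hs : ({a, b, c, d, e} : Set V).ncard = 5 := by
    classical
    obtain ⟨hab, hac, had, hbc, hbd, hcd, -⟩ := h₁
    rw [Set.ncard_eq_toFinset_card']
    simp [Finset.card_insert_of_notMem, *, hea.symm, heb.symm, hec.symm, hed.symm]
  intro hG
  have := hG _ hs _ (by intro x; simp only [Set.mem_insert_iff, Set.mem_singleton_iff]; tauto)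
    t hts ⟨a, b, c, d, rfl, h₁⟩ ht
  rw [← this] at het
  simp [hea, heb, hec, hed] at het

lemma exists_fill_of_makesSecondP4 (hBG : B ≤ G) (hG : IsP4Sparse G) {a b c d e : V}
    (h₁ : IsInducedP4 B a b c d) (h : MakesSecondP4 B a b c d e) :
    ∃ x ∈ [a, b, c, d, e], ∃ y ∈ [a, b, c, d, e], G.Adj x y ∧ ¬ B.Adj x y := by
  by_contra! hno
  have hiff : ∀ x ∈ [a, b, c, d, e], ∀ y ∈ [a, b, c, d, e], B.Adj x y ↔ G.Adj x y :=
    fun x hx y hy => ⟨(hBG ·), hno x hx y hy⟩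
  have h₁' : IsInducedP4 G a b c d := by simpa [IsInducedP4, hiff] using h₁
  have h' : MakesSecondP4 G a b c d e := by simpa [MakesSecondP4, IsInducedP4, hiff] using h
  exact not_isP4Sparse_of_makesSecondP4 h₁' h' hG

lemma fillCount_eq_fillCount_sup_edge_add_one [Finite V] {x y : V} (hG : G.Adj x y)
    (hB : ¬ B.Adj x y) : fillCount B G = fillCount (B ⊔ edge x y) G + 1 := by
  have : G.edgeSet \ B.edgeSet = insert s(x, y) (G.edgeSet \ (B ⊔ edge x y).edgeSet) := by
    ext z
    induction z using Sym2.ind with | h p q => ?_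
    simp only [Set.mem_sdiff, mem_edgeSet, Set.mem_insert_iff, Sym2.eq_iff, sup_adj, edge_adj]
    constructor
    · rintro ⟨hGpq, hBpq⟩
      by_cases hpq : p = x ∧ q = y ∨ p = y ∧ q = x
      · exact .inl hpq
      · exact .inr ⟨hGpq, by tauto⟩
    · rintro ((⟨rfl, rfl⟩ | ⟨rfl, rfl⟩) | ⟨hGpq, hBpq⟩)
      exacts [⟨hG, hB⟩, ⟨hG.symm, fun h => hB h.symm⟩, ⟨hGpq, fun h => hBpq (.inl h)⟩]
  rw [fillCount, fillCount, this, Set.ncard_insert_of_notMem (by simp [hG.ne])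
    (Set.toFinite _)]

/-- A certificate, checkable by `decide`, for `ForcesFills.le_fillCount`: a `P₄`-sparse completion
has to add one of the missing edges among the five vertices. -/
def ForcesFills : ℕ → SimpleGraph V → Prop
  | 0, _ => True
  | k + 1, B => ∃ a b c d, IsInducedP4 B a b c d ∧ ∃ e, MakesSecondP4 B a b c d e ∧
      [a, b, c, d, e].Pairwise fun x y => ¬ B.Adj x y → ForcesFills k (B ⊔ edge x y)

theorem ForcesFills.le_fillCount [Finite V] :
    ∀ {k : ℕ} {B G : SimpleGraph V}, ForcesFills k B → B ≤ G → IsP4Sparse G → k ≤ fillCount B G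
  | 0, _, _, _, _, _ => Nat.zero_le _
  | k + 1, B, G, ⟨a, b, c, d, h₁, e, h, hk⟩, hBG, hG => by
    obtain ⟨x, hx, y, hy, hGxy, hBxy⟩ := exists_fill_of_makesSecondP4 hBG hG h₁ h
    have : Std.Symm fun x y => ¬ B.Adj x y → ForcesFills k (B ⊔ edge x y) :=
      ⟨fun x y h hB => edge_comm x y ▸ h fun h' => hB h'.symm⟩
    have := (hk.forall hx hy hGxy.ne hBxy).le_fillCount
      (sup_le hBG ((edge_le_iff G).mpr (.inr hGxy))) hG
    rw [fillCount_eq_fillCount_sup_edge_add_one hGxy hBxy]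
    omega

instance [DecidableEq V] [DecidableRel G.Adj] (a b c d : V) :
    Decidable (IsInducedP4 G a b c d) := by
  unfold IsInducedP4; infer_instance

instance [DecidableEq V] [DecidableRel G.Adj] (a b c d e : V) :
    Decidable (MakesSecondP4 G a b c d e) := by
  unfold MakesSecondP4; infer_instance

/-- Mathlib's instance is built with `rw`, which the kernel cannot evaluate. -/
instance decidableRelEdgeAdj [DecidableEq V] (x y : V) : DecidableRel (edge x y).Adj :=
  fun v w => decidable_of_iff _ (edge_adj x y v w).symm

instance decidableForcesFills [Fintype V] [DecidableEq V] :
    ∀ (k : ℕ) (B : SimpleGraph V) [DecidableRel B.Adj], Decidable (ForcesFills k B)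
  | 0, _, _ => isTrue trivial
  | k + 1, B, _ =>
    have := fun x y : V => decidableForcesFills k (B ⊔ edge x y)
    inferInstanceAs (Decidable (∃ a b c d, IsInducedP4 B a b c d ∧ ∃ e, MakesSecondP4 B a b c d e ∧
      [a, b, c, d, e].Pairwise fun x y => ¬ B.Adj x y → ForcesFills k (B ⊔ edge x y)))

end P4Conflicts

lemma addTail_adj {G : SimpleGraph α} {u w x y : α} :
    (addTail G u w).Adj x y ↔ G.Adj x y ∨ ((x = u ∧ y = w ∨ x = w ∧ y = u) ∧ x ≠ y) := by
  simp [addTail]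

lemma exists_equiv_fin_apply_zero {s : Set α} {n : ℕ} (hs : s.ncard = n + 1) {a : α} (ha : a ∈ s) :
    ∃ σ : Fin (n + 1) ≃ s, σ 0 = ⟨a, ha⟩ := by
  have : Finite s := (Set.finite_of_ncard_pos (by omega)).to_subtype
  let e : Fin (n + 1) ≃ s := (Finite.equivFinOfCardEq (by rw [Nat.card_coe_set_eq, hs])).symm
  exact ⟨(Equiv.swap 0 (e.symm ⟨a, ha⟩)).trans e, by simp⟩


/-- `leg i`, `body i` and `head` play the roles of `S`, `K` and `R = {r}`, with
`f (leg i) = body i`; `tail` is `w`. -/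
inductive TailVertex (ι : Type*)
  | tail
  | leg (i : ι)
  | body (i : ι)
  | head
  deriving DecidableEq

namespace TailVertex

variable {ι : Type*}

def equivOption : TailVertex ι ≃ Option (ι ⊕ ι ⊕ Unit) where
  toFun
    | tail => none
    | leg i => some (.inl i)
    | body i => some (.inr (.inl i))
    | head => some (.inr (.inr ()))
  invFun
    | none => tail
    | some (.inl i) => leg i
    | some (.inr (.inl i)) => body i
    | some (.inr (.inr _)) => head
  left_inv x := by cases x <;> rfl
  right_inv x := by rcases x with _ | i | i | _ <;> rfl

instance [Fintype ι] : Fintype (TailVertex ι) := Fintype.ofEquiv _ equivOption.symm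

end TailVertex

open TailVertex

def thickSpiderTail {ι : Type*} (i₀ : ι) : SimpleGraph (TailVertex ι) where
  Adj
    | leg i, body j | body j, leg i => i ≠ j
    | body i, body j => i ≠ j
    | body _, head | head, body _ => True
    | tail, leg i | leg i, tail => i = i₀
    | _, _ => False
  symm := ⟨by rintro (_ | _ | _ | _) (_ | _ | _ | _) h <;> simp_all [eq_comm]⟩
  loopless := ⟨by rintro (_ | _ | _ | _) h <;> simp_all⟩

instance {ι : Type*} [DecidableEq ι] (i₀ : ι) : DecidableRel (thickSpiderTail i₀).Adj :=
  fun x y => by cases x <;> cases y <;> dsimp only [thickSpiderTail] <;> infer_instance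

abbrev thickSpiderTailCompletion : SimpleGraph (TailVertex (Fin 3)) :=
  thickSpiderTail 0 ⊔ edge (leg 0) (body 0) ⊔ edge (leg 0) head ⊔ edge tail (body 0)

set_option maxRecDepth 10000 in
set_option synthInstance.maxSize 1000 in
lemma isP4Sparse_thickSpiderTailCompletion : IsP4Sparse thickSpiderTailCompletion :=
  isP4Sparse_of_forall_isInducedP4_mem
    {{leg 1, body 2, body 1, leg 2}, {tail, leg 0, body 1, leg 2}, {tail, leg 0, body 2, leg 1}}
    (by decide +kernel) (by decide)

lemma fillCount_thickSpiderTailCompletion :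
    fillCount (thickSpiderTail 0) thickSpiderTailCompletion = 3 := by
  rw [fillCount_eq_fillCount_sup_edge_add_one (x := leg 0) (y := body 0) (by decide) (by decide),
    fillCount_eq_fillCount_sup_edge_add_one (x := leg 0) (y := head) (by decide) (by decide),
    fillCount_eq_fillCount_sup_edge_add_one (x := tail) (y := body 0) (by decide) (by decide)]
  simp [fillCount, thickSpiderTailCompletion]

lemma forcesFills_three_thickSpiderTail : ForcesFills 3 (thickSpiderTail (0 : Fin 3)) := by
  decide +kernel

theorem isLeast_completionFills_thickSpiderTail :
    IsLeast (completionFills IsP4Sparse (thickSpiderTail (0 : Fin 3))) 3 :=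
  ⟨⟨_, le_sup_left.trans (le_sup_left.trans le_sup_left), isP4Sparse_thickSpiderTailCompletion,
      fillCount_thickSpiderTailCompletion⟩,
    fun _ ⟨_, hle, hG, hn⟩ => hn ▸ forcesFills_three_thickSpiderTail.le_fillCount hle hG⟩

namespace TailVertex

variable {ι : Type*}

def lift {S : Set α} (σ : ι ≃ S) (f : α → α) (w r : α) : TailVertex ι → α
  | tail => w
  | leg i => σ i
  | body i => f (σ i)
  | head => r

end TailVertex

namespace ThickSpider

variable {H : SimpleGraph α} {S K : Set α} {f : α → α} {u w r : α} {ι : Type*}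

lemma bijective_lift (hH : ThickSpider H S K {r}) (hcover : S ∪ K ∪ {r} = {w}ᶜ)
    (hf : Set.BijOn f S K) (σ : ι ≃ S) : (lift σ f w r).Bijective := by
  obtain ⟨-, -, -, -, hSK, hSR, hKR, -⟩ := hH
  have hne_w : ∀ {x}, x ∈ S ∪ K ∪ {r} → x ≠ w := by rw [hcover]; exact id
  have hσS : ∀ i, (σ i : α) ∈ S := fun i => (σ i).2
  have hfK : ∀ i, f (σ i) ∈ K := fun i => hf.mapsTo (hσS i)
  have hσ_ne : ∀ i, (σ i : α) ≠ w := fun i => hne_w (by simp [hσS])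
  have hfσ_ne : ∀ i, f (σ i) ≠ w := fun i => hne_w (by simp [hfK])
  have hr_ne : r ≠ w := hne_w (by simp)
  have hσf : ∀ i j, (σ i : α) ≠ f (σ j) := fun i j => hSK.ne_of_mem (hσS i) (hfK j)
  have hσr : ∀ i, (σ i : α) ≠ r := fun i => hSR.ne_of_mem (hσS i) rfl
  have hfr : ∀ i, f (σ i) ≠ r := fun i => hKR.ne_of_mem (hfK i) rfl
  refine ⟨?_, fun x => ?_⟩
  · rintro (_ | i | i | _) (_ | j | j | _) h <;> simp only [lift, leg.injEq, body.injEq,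
      reduceCtorEq] at h ⊢
    all_goals first
      | exact σ.injective (Subtype.ext h)
      | exact σ.injective (Subtype.ext (hf.injOn (hσS i) (hσS j) h))
      | grind
  by_cases hxw : x = w
  · exact ⟨tail, hxw.symm⟩
  have hx : x ∈ S ∪ K ∪ {r} := by rw [hcover]; exact hxw
  rcases hx with (hx | hx) | hx
  · exact ⟨leg (σ.symm ⟨x, hx⟩), by simp [lift]⟩
  · obtain ⟨s, hs, rfl⟩ := hf.surjOn hx
    exact ⟨body (σ.symm ⟨s, hs⟩), by simp [lift]⟩
  · exact ⟨head, hx.symm⟩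

lemma addTail_adj_lift (hH : ThickSpider H S K {r}) (hcover : S ∪ K ∪ {r} = {w}ᶜ)
    (hw : ∀ x, ¬ H.Adj w x) (hf : Set.BijOn f S K) (hfS : ∀ s ∈ S, ∀ k ∈ K, H.Adj s k ↔ k ≠ f s)
    (hu : u ∈ S) (σ : ι ≃ S) {i₀ : ι} (hσ : σ i₀ = ⟨u, hu⟩) (x y : TailVertex ι) :
    (addTail H u w).Adj (lift σ f w r x) (lift σ f w r y) ↔
      (thickSpiderTail i₀).Adj x y := by
  obtain ⟨hS, hK, -, -, hSK, hSR, -, hRK, hRS, -⟩ := hH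
  have hne_w : ∀ {x}, x ∈ S ∪ K ∪ {r} → x ≠ w := by rw [hcover]; exact id
  have hσS : ∀ i, (σ i : α) ∈ S := fun i => (σ i).2
  have hfK : ∀ i, f (σ i) ∈ K := fun i => hf.mapsTo (hσS i)
  have hfσ : ∀ {i j}, f (σ i) = f (σ j) ↔ i = j := by
    intro i j
    rw [hf.injOn.eq_iff (hσS i) (hσS j), Subtype.coe_inj, σ.injective.eq_iff]
  have hσu : ∀ i, (σ i : α) = u ↔ i = i₀ := fun i => by
    rw [← σ.injective.eq_iff, hσ, Subtype.ext_iff]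
  have hlegleg : ∀ i j, ¬ H.Adj (σ i) (σ j) := fun i j => hS _ (hσS i) _ (hσS j)
  have hlegbody : ∀ i j, H.Adj (σ i) (f (σ j)) ↔ i ≠ j := fun i j =>
    (hfS _ (hσS i) _ (hfK j)).trans (by rw [Ne, hfσ, eq_comm])
  have hbodyleg : ∀ i j, H.Adj (f (σ j)) (σ i) ↔ i ≠ j := fun i j =>
    (H.adj_comm _ _).trans (hlegbody i j)
  have hbodybody : ∀ i j, H.Adj (f (σ i)) (f (σ j)) ↔ i ≠ j := fun i j =>
    ⟨fun h hij => h.ne (by rw [hij]), fun hij => hK (hfK i) (hfK j) (hfσ.not.mpr hij)⟩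
  have hheadbody : ∀ i, H.Adj r (f (σ i)) := fun i => hRK r rfl _ (hfK i)
  have hbodyhead : ∀ i, H.Adj (f (σ i)) r := fun i => (hheadbody i).symm
  have hheadleg : ∀ i, ¬ H.Adj r (σ i) := fun i => hRS r rfl _ (hσS i)
  have hleghead : ∀ i, ¬ H.Adj (σ i) r := fun i h => hheadleg i h.symm
  have hw' : ∀ x, ¬ H.Adj x w := fun x h => hw x h.symm
  have hσ_ne : ∀ i, (σ i : α) ≠ w := fun i => hne_w (by simp [hσS])
  have hwσ : ∀ i, w ≠ σ i := fun i => (hσ_ne i).symm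
  have hfσ_ne : ∀ i, f (σ i) ≠ w := fun i => hne_w (by simp [hfK])
  have hr_ne : r ≠ w := hne_w (by simp)
  have hfσu : ∀ i, f (σ i) ≠ u := fun i h => hSK.ne_of_mem hu (hfK i) h.symm
  have hru : r ≠ u := fun h => hSR.ne_of_mem hu rfl h.symm
  rcases x with _ | i | i | _ <;> rcases y with _ | j | j | _ <;>
    simp [lift, addTail_adj, thickSpiderTail, hw, hw', hlegleg, hlegbody, hbodyleg, hbodybody,
      hheadbody, hbodyhead, hheadleg, hleghead, hσ_ne, hwσ, hfσ_ne, hr_ne, hσu, hfσu, hru]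

theorem nonempty_iso_thickSpiderTail (hH : ThickSpider H S K {r}) (hcover : S ∪ K ∪ {r} = {w}ᶜ)
    (hw : ∀ x, ¬ H.Adj w x) (hu : u ∈ S) (σ : ι ≃ S) {i₀ : ι} (hσ : σ i₀ = ⟨u, hu⟩) :
    Nonempty (thickSpiderTail i₀ ≃g addTail H u w) := by
  have ⟨_, _, _, _, _, _, _, _, _, f, hf, hfS⟩ := hH
  exact ⟨⟨.ofBijective _ (hH.bijective_lift hcover hf σ),
    hH.addTail_adj_lift hcover hw hf hfS hu σ hσ _ _⟩⟩

end ThickSpider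

theorem thickSpider_tail_S_K3_R1_general
    (H : SimpleGraph α) (u w : α) (S K R : Set α)
    (hspider : ThickSpider H S K R)
    (hcover : S ∪ K ∪ R = {w}ᶜ)
    (hw : ∀ x, ¬ H.Adj w x)
    (hK3 : K.ncard = 3) (hR : R.ncard = 1) (hu : u ∈ S) :
    IsLeast (completionFills IsP4Sparse (addTail H u w)) K.ncard ∧ K.ncard = 3 := by
  obtain ⟨r, rfl⟩ := Set.ncard_eq_one.mp hR
  have ⟨_, _, hSK, _⟩ := hspider
  obtain ⟨σ, hσ⟩ := exists_equiv_fin_apply_zero (hSK.trans hK3) hu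
  obtain ⟨φ⟩ := hspider.nonempty_iso_thickSpiderTail hcover hw hu σ hσ
  rw [hK3, ← completionFills_isP4Sparse_congr φ]
  exact ⟨isLeast_completionFills_thickSpiderTail, rfl⟩

/-- tail at `u ∈ S` of a thick spider with `|K| = 3` and `|R| = 1`. -/
theorem thickSpider_tail_S_K3_R1 [Fintype α]
    (H : SimpleGraph α) (u w : α) (S K R : Set α)
    (hspider : ThickSpider H S K R)
    (hcover : S ∪ K ∪ R = {w}ᶜ)
    (hw : ∀ x, ¬ H.Adj w x)
    (hK3 : K.ncard = 3) (hR : R.ncard = 1) (hu : u ∈ S) :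
    IsLeast (completionFills IsP4Sparse (addTail H u w)) K.ncard ∧ K.ncard = 3 :=
  thickSpider_tail_S_K3_R1_general H u w S K R hspider hcover hw hK3 hR hu
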